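/- Let Ω ⊂ ℝ² be a bounded balanced convex domain with diameter D, and suppose that for every unit vector e ∈ S¹ and every ρ ∈ (0, 4π/D] one has ∫_Ω cos(ρ e·x) dx ≠ 0. Then a contradiction follows; equivalently, there exists a real vector ξ with 0 < |ξ| ≤ 4π/D and ∫_Ω cos(ξ·x) dx = 0. -/

import Mathlib

/-!
Let `p` be a point of `closure Ω` of maximal norm `M`, so that `D = 2M`, and let `e = p / M`.
In orthonormal coordinates whose first coordinate is `⟪e, x⟫`, Fubini gives
`∫_Ω cos (ρ ⟪e, x⟫) = ∫ A(s) cos (ρ s) ds`, where `A(s)` is the length of the slice of `Ω` at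
height `s`. The slices of a convex set are intervals whose endpoints depend concavely and
convexly on `s`, so `A` is concave on `(-M, M)` and vanishes outside `[-M, M]`.
For `ρ = 2π / M = 4π / D`, folding `[0, M]` at `M / 2` and then at `M / 4` writes
`∫₀ᴹ B(s) cos (ρ s) ds` as `∫₀^{M/4} cos (ρ s) (B(s) + B(M - s) - B(M/2 - s) - B(M/2 + s)) ds`,
which is `≤ 0` for concave `B`. Since the integral equals `vol Ω > 0` at `ρ = 0`, the
intermediate value theorem gives a zero in `(0, 4π / D]`.
-/

open Real MeasureTheory
open scoped RealInnerProductSpace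

open Set intervalIntegral
open scoped Pointwise

theorem ConcaveOn.add_le_add_of_add_eq {s : Set ℝ} {f : ℝ → ℝ} (hf : ConcaveOn ℝ s f)
    {x x' y y' : ℝ} (hx : x ∈ s) (hx' : x' ∈ s) (hxy : x ≤ y) (hyx' : y ≤ x')
    (hsum : x + x' = y + y') : f x + f x' ≤ f y + f y' := by
  rcases hxy.eq_or_lt with rfl | hlt
  · rw [show y' = x' by linarith]
  set t := (x' - y) / (x' - x)
  have hpos : 0 < x' - x := by linarith
  have ht0 : 0 ≤ t := div_nonneg (by linarith) hpos.le
  have ht1 : t ≤ 1 := (div_le_one hpos).2 (by linarith)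
  have ht : t * (x' - x) = x' - y := div_mul_cancel₀ _ hpos.ne'
  have hty : t * x + (1 - t) * x' = y := by linear_combination -ht
  have hty' : (1 - t) * x + t * x' = y' := by linear_combination ht + hsum
  have h₁ := hf.2 hx hx' ht0 (sub_nonneg.2 ht1) (by ring)
  have h₂ := hf.2 hx hx' (sub_nonneg.2 ht1) ht0 (by ring)
  simp only [smul_eq_mul] at h₁ h₂
  rw [hty] at h₁
  rw [hty'] at h₂
  linarith

theorem intervalIntegral.integral_eq_integral_add_reflect {E : Type*} [NormedAddCommGroup E]
    [NormedSpace ℝ E] {f : ℝ → E} {a b : ℝ}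
    (hf : IntervalIntegrable f volume a b) :
    ∫ x in a..b, f x = ∫ x in a..(a + b) / 2, (f x + f (a + b - x)) := by
  have hm : (a + b) / 2 ∈ uIcc a b := by
    rcases le_total a b with h | h
    · rw [uIcc_of_le h]; constructor <;> linarith
    · rw [uIcc_of_ge h]; constructor <;> linarith
  have h₁ : IntervalIntegrable f volume a ((a + b) / 2) := hf.mono_set (uIcc_subset_uIcc_left hm)
  have h₂ : IntervalIntegrable f volume ((a + b) / 2) b := hf.mono_set (uIcc_subset_uIcc_right hm)
  have hreflect : ∫ x in a..(a + b) / 2, f (a + b - x) = ∫ x in (a + b) / 2..b, f x := by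
    rw [integral_comp_sub_left]; congr 1 <;> ring
  have h₂' : IntervalIntegrable (fun x => f (a + b - x)) volume a ((a + b) / 2) := by
    have := (h₂.comp_sub_left (a + b)).symm
    rwa [show a + b - b = a by ring, show a + b - (a + b) / 2 = (a + b) / 2 by ring] at this
  rw [integral_add h₁ h₂', hreflect, integral_add_adjacent_intervals h₁ h₂]

theorem intervalIntegral.integral_symmetric_eq_integral_add_comp_neg {E : Type*}
    [NormedAddCommGroup E] [NormedSpace ℝ E] {f : ℝ → E} {a : ℝ}
    (hf : IntervalIntegrable f volume (-a) a) :
    ∫ x in -a..a, f x = ∫ x in 0..a, (f x + f (-x)) := by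
  have hmem : (0 : ℝ) ∈ uIcc (-a) a := by
    rcases le_total 0 a with h | h
    · rw [uIcc_of_le (by linarith)]; constructor <;> linarith
    · rw [uIcc_of_ge (by linarith)]; constructor <;> linarith
  have h₁ : IntervalIntegrable f volume (-a) 0 := hf.mono_set (uIcc_subset_uIcc_left hmem)
  have h₂ : IntervalIntegrable f volume 0 a := hf.mono_set (uIcc_subset_uIcc_right hmem)
  have h₁' : IntervalIntegrable (fun x => f (-x)) volume 0 a := by
    simpa using ((IntervalIntegrable.iff_comp_neg (by simp)).1 h₁).symm
  rw [integral_add h₂ h₁', integral_comp_neg, neg_zero, add_comm,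
    integral_add_adjacent_intervals h₁ h₂]

theorem ConcaveOn.intervalIntegral_mul_cos_nonpos {M : ℝ} (hM : 0 < M) {B : ℝ → ℝ}
    (hB : ConcaveOn ℝ (Ioo 0 M) B) (hBi : IntervalIntegrable B volume 0 M) :
    ∫ s in 0..M, B s * cos (2 * π / M * s) ≤ 0 := by
  set ρ := 2 * π / M
  have hρM : ρ * M = 2 * π := div_mul_cancel₀ _ hM.ne'
  have hBrefl : IntervalIntegrable (fun s => B (M - s)) volume 0 M := by
    simpa using (hBi.comp_sub_left M).symm
  have hg : IntervalIntegrable (fun s => (B s + B (M - s)) * cos (ρ * s)) volume 0 (M / 2) :=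
    ((hBi.add hBrefl).mul_continuousOn (by fun_prop)).mono_set
      (uIcc_subset_uIcc_left (by rw [uIcc_of_le hM.le]; constructor <;> linarith))
  have hfold : ∫ s in 0..M, B s * cos (ρ * s) =
      ∫ s in 0..M / 4, cos (ρ * s) * ((B s + B (M - s)) - (B (M / 2 - s) + B (M / 2 + s))) := by
    have hsymm : ∀ s, cos (ρ * (M - s)) = cos (ρ * s) := fun s => by
      rw [show ρ * (M - s) = 2 * π - ρ * s by linear_combination hρM, cos_two_pi_sub]
    have hanti : ∀ s, cos (ρ * (M / 2 - s)) = -cos (ρ * s) := fun s => by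
      rw [show ρ * (M / 2 - s) = π - ρ * s by linear_combination hρM / 2, cos_pi_sub]
    rw [integral_eq_integral_add_reflect (hBi.mul_continuousOn (by fun_prop))]
    simp only [zero_add, hsymm, ← add_mul]
    rw [integral_eq_integral_add_reflect hg, zero_add, show M / 2 / 2 = M / 4 by ring]
    refine integral_congr fun s _ => ?_
    simp only [hanti, show M - (M / 2 - s) = M / 2 + s by ring]
    ring
  rw [hfold, integral_of_le (by positivity)]
  refine setIntegral_nonpos measurableSet_Ioc fun s ⟨hs₀, hs₁⟩ =>
    mul_nonpos_of_nonneg_of_nonpos ?_ ?_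
  · apply cos_nonneg_of_neg_pi_div_two_le_of_le <;> nlinarith [pi_pos]
  · have := hB.add_le_add_of_add_eq (x := s) (x' := M - s) (y := M / 2 - s) (y' := M / 2 + s)
      ⟨hs₀, by linarith⟩ ⟨by linarith, by linarith⟩ (by linarith) (by linarith) (by ring)
    linarith

theorem Real.volume_real_eq_sSup_sub_sInf {S : Set ℝ} (hS : Convex ℝ S) (hne : S.Nonempty)
    (hbdd : Bornology.IsBounded S) : volume.real S = sSup S - sInf S := by
  have hIoo : Ioo (sInf S) (sSup S) ⊆ S := fun t ⟨hlt, hgt⟩ => by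
    obtain ⟨a, ha, hat⟩ := exists_lt_of_csInf_lt hne hlt
    obtain ⟨b, hb, htb⟩ := exists_lt_of_lt_csSup hne hgt
    exact hS.ordConnected.out ha hb ⟨hat.le, htb.le⟩
  have hIcc : S ⊆ Icc (sInf S) (sSup S) := fun t ht =>
    ⟨csInf_le hbdd.bddBelow ht, le_csSup hbdd.bddAbove ht⟩
  have hle : sInf S ≤ sSup S := csInf_le_csSup hne hbdd.bddBelow hbdd.bddAbove
  apply le_antisymm
  · simpa [hle] using measureReal_mono (μ := volume) hIcc measure_Icc_lt_top.ne
  · simpa [hle] using measureReal_mono (μ := volume) hIoo hbdd.measure_lt_top.ne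

theorem Real.sSup_sub_sInf_smul_add_smul {S T : Set ℝ} (hS : S.Nonempty) (hT : T.Nonempty)
    (hSb : Bornology.IsBounded S) (hTb : Bornology.IsBounded T) {a b : ℝ} (ha : 0 ≤ a)
    (hb : 0 ≤ b) :
    sSup (a • S + b • T) - sInf (a • S + b • T) =
      a * (sSup S - sInf S) + b * (sSup T - sInf T) := by
  rw [csSup_add hS.smul_set (hSb.bddAbove.smul_of_nonneg ha) hT.smul_set
      (hTb.bddAbove.smul_of_nonneg hb),
    csInf_add hS.smul_set (hSb.bddBelow.smul_of_nonneg ha) hT.smul_set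
      (hTb.bddBelow.smul_of_nonneg hb),
    Real.sSup_smul_of_nonneg ha, Real.sSup_smul_of_nonneg hb, Real.sInf_smul_of_nonneg ha,
    Real.sInf_smul_of_nonneg hb, smul_eq_mul, smul_eq_mul, smul_eq_mul, smul_eq_mul]
  ring

theorem concaveOn_volume_real_slice {C : Set (ℝ × ℝ)} (hC : Convex ℝ C)
    (hbdd : Bornology.IsBounded C) :
    ConcaveOn ℝ (Prod.fst '' C) fun s => volume.real (Prod.mk s ⁻¹' C) := by
  refine ⟨hC.linear_image (LinearMap.fst ℝ ℝ ℝ), ?_⟩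
  set S := fun s => Prod.mk s ⁻¹' C
  have hcomb : ∀ {a b s₁ s₂ t₁ t₂ : ℝ}, 0 ≤ a → 0 ≤ b → a + b = 1 → t₁ ∈ S s₁ → t₂ ∈ S s₂ →
      a * t₁ + b * t₂ ∈ S (a * s₁ + b * s₂) := fun ha hb hab h₁ h₂ => by
    simpa [S] using hC h₁ h₂ ha hb hab
  have hconv : ∀ s, Convex ℝ (S s) := fun s t₁ h₁ t₂ h₂ a b ha hb hab => by
    simpa [← add_mul, hab] using hcomb ha hb hab h₁ h₂
  have hbdd' : ∀ s, Bornology.IsBounded (S s) := fun s =>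
    (LipschitzWith.prod_snd.isBounded_image hbdd).subset fun t ht => ⟨(s, t), ht, rfl⟩
  rintro _ ⟨⟨s₁, t₁⟩, h₁, rfl⟩ _ ⟨⟨s₂, t₂⟩, h₂, rfl⟩ a b ha hb hab
  have hne₁ : (S s₁).Nonempty := ⟨t₁, h₁⟩
  have hne₂ : (S s₂).Nonempty := ⟨t₂, h₂⟩
  have hsub : a • S s₁ + b • S s₂ ⊆ S (a * s₁ + b * s₂) := by
    rintro _ ⟨_, ⟨r₁, hr₁, rfl⟩, _, ⟨r₂, hr₂, rfl⟩, rfl⟩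
    exact hcomb ha hb hab hr₁ hr₂
  have hne : (a • S s₁ + b • S s₂).Nonempty := hne₁.smul_set.add hne₂.smul_set
  simp only [smul_eq_mul]
  rw [Real.volume_real_eq_sSup_sub_sInf (hconv _) hne₁ (hbdd' _),
    Real.volume_real_eq_sSup_sub_sInf (hconv _) hne₂ (hbdd' _),
    Real.volume_real_eq_sSup_sub_sInf (hconv _) (hne.mono hsub) (hbdd' _),
    ← Real.sSup_sub_sInf_smul_add_smul hne₁ hne₂ (hbdd' _) (hbdd' _) ha hb]
  exact sub_le_sub (csSup_le_csSup (hbdd' _).bddAbove hne hsub)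
    (csInf_le_csInf (hbdd' _).bddBelow hne hsub)

theorem MeasureTheory.setIntegral_comp_fst_eq_integral_measureReal_smul {α β E : Type*}
    [MeasurableSpace α] [MeasurableSpace β] [NormedAddCommGroup E] [NormedSpace ℝ E]
    [CompleteSpace E]
    {μ : Measure α} {ν : Measure β} [SFinite μ] [SFinite ν] {C : Set (α × β)}
    (hC : MeasurableSet C) {f : α → E} (hf : IntegrableOn (fun z => f z.1) C (μ.prod ν)) :
    ∫ z in C, f z.1 ∂μ.prod ν = ∫ s, ν.real (Prod.mk s ⁻¹' C) • f s ∂μ := by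
  rw [← integral_indicator hC, integral_prod _ ((integrable_indicator_iff hC).2 hf)]
  refine integral_congr_ae (Filter.Eventually.of_forall fun s => ?_)
  dsimp only
  rw [← integral_indicator_const _ (measurable_prodMk_left hC)]
  rfl

theorem setIntegral_cos_fst_nonpos {C : Set (ℝ × ℝ)} (hCm : MeasurableSet C) (hC : Convex ℝ C)
    (hbdd : Bornology.IsBounded C) {M : ℝ} (hM : 0 < M) (hsub : Ioo (-M) M ⊆ Prod.fst '' C)
    (hsup : Prod.fst '' C ⊆ Icc (-M) M) :
    ∫ z in C, cos (2 * π / M * z.1) ≤ 0 := by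
  set A := fun s => volume.real (Prod.mk s ⁻¹' C)
  set c := fun s => cos (2 * π / M * s)
  have hc : Continuous c := by fun_prop
  have hc_le : ∀ s, ‖c s‖ ≤ 1 := fun s => abs_cos_le_one _
  have hAi : Integrable A := by
    refine Measure.integrable_measure_prodMk_left hCm ?_
    rw [← Measure.volume_eq_prod]
    exact hbdd.measure_lt_top.ne
  have hA0 : ∀ s ∉ Icc (-M) M, A s * c s = 0 := fun s hs => by
    have : Prod.mk s ⁻¹' C = ∅ := eq_empty_of_forall_notMem fun t ht => hs (hsup ⟨_, ht, rfl⟩)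
    simp [A, this]
  have hAc : ConcaveOn ℝ (Ioo (-M) M) A :=
    (concaveOn_volume_real_slice hC hbdd).subset hsub (convex_Ioo _ _)
  have hBc : ConcaveOn ℝ (Ioo 0 M) fun s => A s + A (-s) := by
    refine (hAc.subset ?_ (convex_Ioo _ _)).add
      ((hAc.comp_linearMap (-LinearMap.id)).subset ?_ (convex_Ioo _ _)) <;>
    · intro s ⟨hs₀, hs₁⟩
      simp only [mem_preimage, LinearMap.neg_apply, LinearMap.id_apply, mem_Ioo]
      constructor <;> linarith
  have hint : IntegrableOn (fun z : ℝ × ℝ => c z.1) C (volume.prod volume) :=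
    (integrableOn_const (C := (1 : ℝ)) hbdd.measure_lt_top.ne).mono'
      (hc.comp continuous_fst).aestronglyMeasurable (ae_of_all _ fun z => hc_le z.1)
  calc ∫ z in C, c z.1
      = ∫ s, A s * c s := by
        rw [Measure.volume_eq_prod]
        exact setIntegral_comp_fst_eq_integral_measureReal_smul hCm hint
    _ = ∫ s in -M..M, A s * c s := by
        rw [integral_of_le (by linarith), ← integral_Icc_eq_integral_Ioc,
          setIntegral_eq_integral_of_forall_compl_eq_zero hA0]
    _ = ∫ s in 0..M, (A s + A (-s)) * c s := by
        rw [integral_symmetric_eq_integral_add_comp_neg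
          (hAi.mul_bdd hc.aestronglyMeasurable (ae_of_all _ hc_le)).intervalIntegrable]
        simp only [c, mul_neg, cos_neg, add_mul]
    _ ≤ 0 := hBc.intervalIntegral_mul_cos_nonpos hM (hAi.add hAi.comp_neg).intervalIntegrable

theorem EuclideanSpace.exists_measurePreserving_fst_eq_inner {e : EuclideanSpace ℝ (Fin 2)}
    (he : ‖e‖ = 1) : ∃ T : EuclideanSpace ℝ (Fin 2) ≃L[ℝ] ℝ × ℝ,
      MeasurePreserving T ∧ ∀ x, (T x).1 = ⟪e, x⟫ := by
  have hcard : Module.finrank ℝ (EuclideanSpace ℝ (Fin 2)) = Fintype.card (Fin 2) := by simp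
  obtain ⟨b, hb⟩ := Orthonormal.exists_orthonormalBasis_extension_of_card_eq hcard
    (v := fun _ => e) (s := {0}) (orthonormal_subsingleton_iff.2 fun _ => he)
  refine ⟨b.repr.toContinuousLinearEquiv.trans
    ((EuclideanSpace.equiv (Fin 2) ℝ).trans (ContinuousLinearEquiv.finTwoArrow ℝ ℝ)),
    ((volume_preserving_finTwoArrow ℝ).comp (PiLp.volume_preserving_ofLp _)).comp
      b.measurePreserving_repr, fun x => ?_⟩
  simp [b.repr_apply_apply, hb 0 rfl]

theorem setIntegral_cos_inner_nonpos {Ω : Set (EuclideanSpace ℝ (Fin 2))} (hΩ : MeasurableSet Ω)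
    (hconv : Convex ℝ Ω) (hbdd : Bornology.IsBounded Ω) {e : EuclideanSpace ℝ (Fin 2)}
    (he : ‖e‖ = 1) {M : ℝ} (hM : 0 < M) (hsub : Ioo (-M) M ⊆ (fun x => ⟪e, x⟫) '' Ω)
    (hsup : (fun x => ⟪e, x⟫) '' Ω ⊆ Icc (-M) M) :
    ∫ x in Ω, cos (2 * π / M * ⟪e, x⟫) ≤ 0 := by
  obtain ⟨T, hT, hTe⟩ := EuclideanSpace.exists_measurePreserving_fst_eq_inner he
  have hproj : Prod.fst '' (T '' Ω) = (fun x => ⟪e, x⟫) '' Ω := by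
    rw [image_image]; simp only [hTe]
  have hemb := T.toHomeomorph.measurableEmbedding
  calc ∫ x in Ω, cos (2 * π / M * ⟪e, x⟫)
      = ∫ z in T '' Ω, cos (2 * π / M * z.1) := by
        simpa only [hTe] using
          (hT.setIntegral_image_emb hemb (fun z => cos (2 * π / M * z.1)) Ω).symm
    _ ≤ 0 := setIntegral_cos_fst_nonpos (hemb.measurableSet_image.2 hΩ)
        (hconv.linear_image (T : EuclideanSpace ℝ (Fin 2) →ₗ[ℝ] ℝ × ℝ))
        (T.lipschitz.isBounded_image hbdd) hM (hproj ▸ hsub) (hproj ▸ hsup)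

theorem exists_mem_Ioc_setIntegral_cos_eq_zero {α : Type*} [MeasurableSpace α] {μ : Measure α}
    {s : Set α} (hs₀ : μ s ≠ 0) (hs : μ s ≠ ⊤) {φ : α → ℝ} (hφ : Measurable φ) {ρ : ℝ}
    (hρ : 0 ≤ ρ) (hneg : ∫ x in s, cos (ρ * φ x) ∂μ ≤ 0) :
    ∃ t ∈ Ioc 0 ρ, ∫ x in s, cos (t * φ x) ∂μ = 0 := by
  set G := fun t => ∫ x in s, cos (t * φ x) ∂μ
  have hG : Continuous G := continuous_of_dominated (bound := fun _ => 1)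
    (fun t => (by fun_prop : Measurable fun x => cos (t * φ x)).aestronglyMeasurable)
    (fun t => ae_of_all _ fun x => abs_cos_le_one _) (integrableOn_const hs)
    (ae_of_all _ fun x => by fun_prop)
  have hG₀ : 0 < G 0 := by
    simp only [G, zero_mul, cos_zero, setIntegral_const, smul_eq_mul, mul_one]
    exact ENNReal.toReal_pos hs₀ hs
  obtain ⟨t, ht, hGt⟩ := intermediate_value_Icc' hρ hG.continuousOn ⟨hneg, hG₀.le⟩
  refine ⟨t, ⟨ht.1.lt_of_ne ?_, ht.2⟩, hGt⟩
  rintro rfl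
  exact hG₀.ne' hGt

theorem Metric.diam_eq_two_mul_norm_of_forall_neg_mem {E : Type*} [NormedAddCommGroup E]
    [NormedSpace ℝ E] {Ω : Set E} (hbdd : Bornology.IsBounded Ω) (hbal : ∀ x ∈ Ω, -x ∈ Ω)
    {p : E} (hp : p ∈ closure Ω) (hmax : ∀ x ∈ Ω, ‖x‖ ≤ ‖p‖) :
    Metric.diam Ω = 2 * ‖p‖ := by
  apply le_antisymm
  · refine Metric.diam_le_of_forall_dist_le (by positivity) fun x hx y hy => ?_
    rw [dist_eq_norm]
    linarith [norm_sub_le x y, hmax x hx, hmax y hy]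
  · have hneg : -p ∈ closure Ω := map_mem_closure continuous_neg hp hbal
    calc 2 * ‖p‖ = dist p (-p) := by
          rw [dist_eq_norm, sub_neg_eq_add, ← two_smul ℝ, norm_smul, Real.norm_two]
      _ ≤ Metric.diam (closure Ω) := Metric.dist_le_diam_of_mem hbdd.closure hp hneg
      _ = Metric.diam Ω := Metric.diam_closure Ω

theorem Convex.smul_mem_of_mem_closure {E : Type*} [AddCommGroup E] [Module ℝ E]
    [TopologicalSpace E] [IsTopologicalAddGroup E] [ContinuousSMul ℝ E] {Ω : Set E}
    (hconv : Convex ℝ Ω) (hopen : IsOpen Ω) (hbal : ∀ x ∈ Ω, -x ∈ Ω) {p : E}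
    (hp : p ∈ closure Ω) {t : ℝ} (ht : |t| < 1) : t • p ∈ Ω := by
  obtain ⟨x, hx⟩ := closure_nonempty_iff.1 ⟨p, hp⟩
  have h₀ : (0 : E) ∈ interior Ω := by
    simpa [hopen.interior_eq] using hconv.midpoint_mem hx (hbal x hx)
  have hpos : ∀ t : ℝ, 0 ≤ t → t < 1 → t • p ∈ Ω := fun t ht₀ ht₁ => by
    have := hconv.combo_interior_closure_mem_interior h₀ hp (sub_pos.2 ht₁) ht₀ (sub_add_cancel 1 t)
    rwa [smul_zero, zero_add, hopen.interior_eq] at this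
  rcases le_total 0 t with h | h
  · exact hpos t h (abs_lt.1 ht).2
  · simpa using hbal _ (hpos (-t) (neg_nonneg.2 h) (by linarith [(abs_lt.1 ht).1]))

theorem Convex.Ioo_subset_image_inner_of_mem_closure {F : Type*} [NormedAddCommGroup F]
    [InnerProductSpace ℝ F] {Ω : Set F} (hconv : Convex ℝ Ω) (hopen : IsOpen Ω)
    (hbal : ∀ x ∈ Ω, -x ∈ Ω) {p : F} (hp : p ∈ closure Ω) :
    Ioo (-‖p‖) ‖p‖ ⊆ (fun x => ⟪‖p‖⁻¹ • p, x⟫) '' Ω := fun s hs => by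
  have hM : 0 < ‖p‖ := by linarith [hs.1, hs.2]
  refine ⟨(s / ‖p‖) • p, hconv.smul_mem_of_mem_closure hopen hbal hp ?_, ?_⟩
  · rw [abs_div, abs_of_pos hM, div_lt_one hM, abs_lt]
    exact hs
  · simp only [real_inner_smul_left, real_inner_smul_right, real_inner_self_eq_norm_sq]
    field_simp

theorem stmt_9 (Ω : Set (EuclideanSpace ℝ (Fin 2)))
    (hopen : IsOpen Ω) (hne : Ω.Nonempty) (hbdd : Bornology.IsBounded Ω)
    (hconv : Convex ℝ Ω) (hbal : ∀ x ∈ Ω, -x ∈ Ω) :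
    ∃ ξ : EuclideanSpace ℝ (Fin 2),
      0 < ‖ξ‖ ∧ ‖ξ‖ ≤ 4 * π / Metric.diam Ω ∧
        ∫ x in Ω, Real.cos (⟪ξ, x⟫ : ℝ) = 0 := by
  obtain ⟨p, hp, hpmax⟩ :=
    hbdd.isCompact_closure.exists_isMaxOn hne.closure continuous_norm.continuousOn
  have hle : ∀ x ∈ Ω, ‖x‖ ≤ ‖p‖ := fun x hx => hpmax (subset_closure hx)
  have hvol : volume Ω ≠ 0 := (hopen.measure_pos volume hne).ne'
  have hp₀ : p ≠ 0 := by
    rintro rfl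
    exact hvol (measure_mono_null (fun x hx => by simpa using hle x hx) (measure_singleton 0))
  set e := ‖p‖⁻¹ • p
  have he : ‖e‖ = 1 := norm_smul_inv_norm hp₀
  have hsup : (fun x => ⟪e, x⟫) '' Ω ⊆ Icc (-‖p‖) ‖p‖ := by
    rintro _ ⟨x, hx, rfl⟩
    exact abs_le.1 ((abs_real_inner_le_norm e x).trans (by rw [he, one_mul]; exact hle x hx))
  obtain ⟨t, ⟨ht₀, htρ⟩, ht⟩ := exists_mem_Ioc_setIntegral_cos_eq_zero hvol
    hbdd.measure_lt_top.ne (by fun_prop) (by positivity)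
    (setIntegral_cos_inner_nonpos hopen.measurableSet hconv hbdd he (norm_pos_iff.2 hp₀)
      (hconv.Ioo_subset_image_inner_of_mem_closure hopen hbal hp) hsup)
  have hnorm : ‖t • e‖ = t := by rw [norm_smul, he, mul_one, norm_of_nonneg ht₀.le]
  refine ⟨t • e, by rwa [hnorm], ?_, by simpa only [real_inner_smul_left] using ht⟩
  rw [hnorm, Metric.diam_eq_two_mul_norm_of_forall_neg_mem hbdd hbal hp hle]
  calc t ≤ 2 * π / ‖p‖ := htρ
    _ = 4 * π / (2 * ‖p‖) := by ring
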